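/- Assume b = e and b ≠ 0 (with a, d ∈ ℝ arbitrary). Let u be a solution of the Longstaff–Schwartz equation on Ω, and let ε ∈ ℝ. Then the function w(x,y,t) = (1 + bε·e^{bt})^{-2(a+d)} · exp( 2b²ε·e^{bt}·(x+y)/(1 + bε·e^{bt}) ) · u( x/(1 + bε·e^{bt}), y/(1 + bε·e^{bt}), t − ln(1 + bε·e^{bt})/b ) satisfies the Longstaff–Schwartz equation at every point (x,y,t) ∈ Ω with 1 + bε·e^{bt} > 0. -/

import Mathlib

/-- Partial derivative in `x`. -/
noncomputable def pdX (u : ℝ → ℝ → ℝ → ℝ) (x y t : ℝ) : ℝ := deriv (fun z => u z y t) x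

/-- Partial derivative in `y`. -/
noncomputable def pdY (u : ℝ → ℝ → ℝ → ℝ) (x y t : ℝ) : ℝ := deriv (fun z => u x z t) y

/-- Partial derivative in `t`. -/
noncomputable def pdT (u : ℝ → ℝ → ℝ → ℝ) (x y t : ℝ) : ℝ := deriv (fun z => u x y z) t

/-- Second partial derivative in `x`. -/
noncomputable def pdXX (u : ℝ → ℝ → ℝ → ℝ) (x y t : ℝ) : ℝ := deriv (fun z => pdX u z y t) x

/-- Second partial derivative in `y`. -/
noncomputable def pdYY (u : ℝ → ℝ → ℝ → ℝ) (x y t : ℝ) : ℝ := deriv (fun z => pdY u x z t) y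

/-- The domain `Ω = {(x,y,t) : x > 0, y > 0}`. -/
def Omega : Set (ℝ × ℝ × ℝ) := {p | 0 < p.1 ∧ 0 < p.2.1}

/-- The Longstaff–Schwartz (Kolmogorov backward) equation
`u_t = −((a−bx)·u_x + (d−ey)·u_y + (x/2)·u_xx + (y/2)·u_yy)` holds at the point `(x,y,t)`. -/
def LSEq (a b d e : ℝ) (u : ℝ → ℝ → ℝ → ℝ) (x y t : ℝ) : Prop :=
  pdT u x y t =
    -((a - b * x) * pdX u x y t + (d - e * y) * pdY u x y t +
      x / 2 * pdXX u x y t + y / 2 * pdYY u x y t)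

/-- `u` is a solution of the Longstaff–Schwartz equation on `Ω`: it is C² on `Ω` and
satisfies the equation at every point of `Ω`. -/
def IsLSSolution (a b d e : ℝ) (u : ℝ → ℝ → ℝ → ℝ) : Prop :=
  ContDiffOn ℝ 2 (fun p : ℝ × ℝ × ℝ => u p.1 p.2.1 p.2.2) Omega ∧
  ∀ x y t : ℝ, 0 < x → 0 < y → LSEq a b d e u x y t

/-! With `A(t) = 1 + bεe^{bt}`, the transformed function has the form
`K(t) · exp (C(t)(x + y) / A(t)) · u (x / A, y / A, τ(t))`, so all its partial derivatives follow
from those of `u` at the rescaled point by the chain rule. Since `τ' = 1 / A` and `A' = b (A - 1)`,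
substituting the equation for `u` at that point turns the equation for the transformed function
into an algebraic identity in `A`, `exp (bt)` and the derivatives of `u`. -/

open Real

lemma isOpen_Omega : IsOpen Omega :=
  (isOpen_lt continuous_const continuous_fst).inter (isOpen_lt continuous_const continuous_snd.fst)

def tripleUncurry (u : ℝ → ℝ → ℝ → ℝ) (p : ℝ × ℝ × ℝ) : ℝ := u p.1 p.2.1 p.2.2

section SmoothOnOmega

variable {u : ℝ → ℝ → ℝ → ℝ} {x y t : ℝ}

lemma contDiffAt_tripleUncurry (hu : ContDiffOn ℝ 2 (tripleUncurry u) Omega) (hx : 0 < x)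
    (hy : 0 < y) : ContDiffAt ℝ 2 (tripleUncurry u) (x, y, t) :=
  hu.contDiffAt (isOpen_Omega.mem_nhds ⟨hx, hy⟩)

lemma fderiv_tripleUncurry_apply (hu : ContDiffOn ℝ 2 (tripleUncurry u) Omega) (hx : 0 < x)
    (hy : 0 < y) (v : ℝ × ℝ × ℝ) :
    fderiv ℝ (tripleUncurry u) (x, y, t) v =
      v.1 * pdX u x y t + v.2.1 * pdY u x y t + v.2.2 * pdT u x y t := by
  have hL := ((contDiffAt_tripleUncurry (t := t) hu hx hy).differentiableAt two_ne_zero).hasFDerivAt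
  have hX : HasDerivAt (fun z => u z y t) (fderiv ℝ (tripleUncurry u) (x, y, t) (1, 0, 0)) x :=
    hL.comp_hasDerivAt (f := fun z => (z, y, t)) x
      ((hasDerivAt_id x).prodMk ((hasDerivAt_const x y).prodMk (hasDerivAt_const x t)))
  have hY : HasDerivAt (fun z => u x z t) (fderiv ℝ (tripleUncurry u) (x, y, t) (0, 1, 0)) y :=
    hL.comp_hasDerivAt (f := fun z => (x, z, t)) y
      ((hasDerivAt_const y x).prodMk ((hasDerivAt_id y).prodMk (hasDerivAt_const y t)))
  have hT : HasDerivAt (fun z => u x y z) (fderiv ℝ (tripleUncurry u) (x, y, t) (0, 0, 1)) t :=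
    hL.comp_hasDerivAt (f := fun z => (x, y, z)) t
      ((hasDerivAt_const t x).prodMk ((hasDerivAt_const t y).prodMk (hasDerivAt_id t)))
  have hv : v = v.1 • ((1 : ℝ), (0 : ℝ), (0 : ℝ)) + v.2.1 • ((0 : ℝ), (1 : ℝ), (0 : ℝ)) +
      v.2.2 • ((0 : ℝ), (0 : ℝ), (1 : ℝ)) := by simp
  rw [hv, map_add, map_add, map_smul, map_smul, map_smul, pdX, pdY, pdT, hX.deriv, hY.deriv,
    hT.deriv]
  simp

lemma hasDerivAt_comp_curve (hu : ContDiffOn ℝ 2 (tripleUncurry u) Omega)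
    {γ₁ γ₂ γ₃ : ℝ → ℝ} {γ₁' γ₂' γ₃' s : ℝ} (h₁ : HasDerivAt γ₁ γ₁' s) (h₂ : HasDerivAt γ₂ γ₂' s)
    (h₃ : HasDerivAt γ₃ γ₃' s) (hpos₁ : 0 < γ₁ s) (hpos₂ : 0 < γ₂ s) :
    HasDerivAt (fun s => u (γ₁ s) (γ₂ s) (γ₃ s))
      (γ₁' * pdX u (γ₁ s) (γ₂ s) (γ₃ s) + γ₂' * pdY u (γ₁ s) (γ₂ s) (γ₃ s) +
        γ₃' * pdT u (γ₁ s) (γ₂ s) (γ₃ s)) s := by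
  have hL := ((contDiffAt_tripleUncurry (t := γ₃ s) hu hpos₁ hpos₂).differentiableAt
    two_ne_zero).hasFDerivAt
  have := hL.comp_hasDerivAt s (h₁.prodMk (h₂.prodMk h₃))
  rwa [fderiv_tripleUncurry_apply hu hpos₁ hpos₂] at this

lemma hasDerivAt_pdX (hu : ContDiffOn ℝ 2 (tripleUncurry u) Omega) (hx : 0 < x) (hy : 0 < y) :
    HasDerivAt (fun z => u z y t) (pdX u x y t) x :=
  (((contDiffAt_tripleUncurry hu hx hy).differentiableAt two_ne_zero).comp
    (f := fun z => (z, y, t)) x (differentiableAt_id.prodMk (differentiableAt_const _))).hasDerivAt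

lemma hasDerivAt_pdY (hu : ContDiffOn ℝ 2 (tripleUncurry u) Omega) (hx : 0 < x) (hy : 0 < y) :
    HasDerivAt (fun z => u x z t) (pdY u x y t) y :=
  (((contDiffAt_tripleUncurry hu hx hy).differentiableAt two_ne_zero).comp
    (f := fun z => (x, z, t)) y
    ((differentiableAt_const _).prodMk
      (differentiableAt_id.prodMk (differentiableAt_const _)))).hasDerivAt

lemma differentiableAt_fderiv_tripleUncurry_apply (hu : ContDiffOn ℝ 2 (tripleUncurry u) Omega)
    (hx : 0 < x) (hy : 0 < y) (v : ℝ × ℝ × ℝ) :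
    DifferentiableAt ℝ (fun p => fderiv ℝ (tripleUncurry u) p v) (x, y, t) :=
  (((contDiffAt_tripleUncurry hu hx hy).fderiv_right (m := 1) (by norm_num)).differentiableAt
    one_ne_zero).clm_apply (differentiableAt_const v)

lemma hasDerivAt_pdXX (hu : ContDiffOn ℝ 2 (tripleUncurry u) Omega) (hx : 0 < x) (hy : 0 < y) :
    HasDerivAt (fun z => pdX u z y t) (pdXX u x y t) x := by
  have hslice : DifferentiableAt ℝ
      (fun z => fderiv ℝ (tripleUncurry u) (z, y, t) (1, 0, 0)) x :=
    (differentiableAt_fderiv_tripleUncurry_apply hu hx hy _).comp (f := fun z => (z, y, t)) x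
      (differentiableAt_id.prodMk (differentiableAt_const _))
  have heq : (fun z => pdX u z y t) =ᶠ[nhds x]
      fun z => fderiv ℝ (tripleUncurry u) (z, y, t) (1, 0, 0) := by
    filter_upwards [eventually_gt_nhds hx] with z hz
    simp [fderiv_tripleUncurry_apply hu hz hy]
  exact (hslice.congr_of_eventuallyEq heq).hasDerivAt

lemma hasDerivAt_pdYY (hu : ContDiffOn ℝ 2 (tripleUncurry u) Omega) (hx : 0 < x) (hy : 0 < y) :
    HasDerivAt (fun z => pdY u x z t) (pdYY u x y t) y := by
  have hslice : DifferentiableAt ℝ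
      (fun z => fderiv ℝ (tripleUncurry u) (x, z, t) (0, 1, 0)) y :=
    (differentiableAt_fderiv_tripleUncurry_apply hu hx hy _).comp (f := fun z => (x, z, t)) y
      ((differentiableAt_const _).prodMk (differentiableAt_id.prodMk (differentiableAt_const _)))
  have heq : (fun z => pdY u x z t) =ᶠ[nhds y]
      fun z => fderiv ℝ (tripleUncurry u) (x, z, t) (0, 1, 0) := by
    filter_upwards [eventually_gt_nhds hy] with z hz
    simp [fderiv_tripleUncurry_apply hu hx hz]
  exact (hslice.congr_of_eventuallyEq heq).hasDerivAt

end SmoothOnOmega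

lemma hasDerivAt_mul_exp_mul_comp_div {f : ℝ → ℝ} {f' K C A x y : ℝ}
    (hf : HasDerivAt f f' (x / A)) :
    HasDerivAt (fun z => K * exp (C * (z + y) / A) * f (z / A))
      (K * exp (C * (x + y) / A) * ((C * f (x / A) + f') / A)) x := by
  have harg : HasDerivAt (fun z => C * (z + y) / A) (C / A) x := by
    simpa using (((hasDerivAt_id x).add_const y).const_mul C).div_const A
  have hdiv : HasDerivAt (fun z => z / A) (1 / A) x := by
    simpa using (hasDerivAt_id x).div_const A
  refine ((harg.exp.const_mul K).mul (hf.comp x hdiv)).congr_deriv ?_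
  simp only [Function.comp_apply]
  ring

lemma hasDerivAt_mul_exp_mul_comp_div' {f : ℝ → ℝ} {f' K C A x y : ℝ}
    (hf : HasDerivAt f f' (y / A)) :
    HasDerivAt (fun z => K * exp (C * (x + z) / A) * f (z / A))
      (K * exp (C * (x + y) / A) * ((C * f (y / A) + f') / A)) y := by
  simpa only [add_comm x] using hasDerivAt_mul_exp_mul_comp_div (K := K) (C := C) (y := x) hf

noncomputable def weightedRescale (K C A τ : ℝ → ℝ) (u : ℝ → ℝ → ℝ → ℝ) (x y t : ℝ) : ℝ :=
  K t * exp (C t * (x + y) / A t) * u (x / A t) (y / A t) (τ t)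

section WeightedRescale

variable {K C A τ : ℝ → ℝ} {u : ℝ → ℝ → ℝ → ℝ} {x y t : ℝ}

lemma pdX_weightedRescale (hu : ContDiffOn ℝ 2 (tripleUncurry u) Omega) (hA : 0 < A t)
    (hx : 0 < x) (hy : 0 < y) :
    pdX (weightedRescale K C A τ u) x y t =
      K t * exp (C t * (x + y) / A t) *
        ((C t * u (x / A t) (y / A t) (τ t) + pdX u (x / A t) (y / A t) (τ t)) / A t) :=
  (hasDerivAt_mul_exp_mul_comp_div (hasDerivAt_pdX hu (div_pos hx hA) (div_pos hy hA))).deriv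

lemma pdY_weightedRescale (hu : ContDiffOn ℝ 2 (tripleUncurry u) Omega) (hA : 0 < A t)
    (hx : 0 < x) (hy : 0 < y) :
    pdY (weightedRescale K C A τ u) x y t =
      K t * exp (C t * (x + y) / A t) *
        ((C t * u (x / A t) (y / A t) (τ t) + pdY u (x / A t) (y / A t) (τ t)) / A t) :=
  (hasDerivAt_mul_exp_mul_comp_div' (hasDerivAt_pdY hu (div_pos hx hA) (div_pos hy hA))).deriv

lemma pdXX_weightedRescale (hu : ContDiffOn ℝ 2 (tripleUncurry u) Omega) (hA : 0 < A t)
    (hx : 0 < x) (hy : 0 < y) :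
    pdXX (weightedRescale K C A τ u) x y t =
      K t * exp (C t * (x + y) / A t) *
        ((C t ^ 2 * u (x / A t) (y / A t) (τ t) + 2 * C t * pdX u (x / A t) (y / A t) (τ t) +
          pdXX u (x / A t) (y / A t) (τ t)) / A t ^ 2) := by
  have hxA := div_pos hx hA
  have hyA := div_pos hy hA
  have hslope : HasDerivAt (fun s => (C t * u s (y / A t) (τ t) + pdX u s (y / A t) (τ t)) / A t)
      ((C t * pdX u (x / A t) (y / A t) (τ t) + pdXX u (x / A t) (y / A t) (τ t)) / A t)
      (x / A t) :=
    (((hasDerivAt_pdX hu hxA hyA).const_mul (C t)).add (hasDerivAt_pdXX hu hxA hyA)).div_const _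
  have hpdX : (fun z => pdX (weightedRescale K C A τ u) z y t) =ᶠ[nhds x] fun z =>
      K t * exp (C t * (z + y) / A t) *
        ((C t * u (z / A t) (y / A t) (τ t) + pdX u (z / A t) (y / A t) (τ t)) / A t) := by
    filter_upwards [eventually_gt_nhds hx] with z hz
    exact pdX_weightedRescale hu hA hz hy
  rw [pdXX, ((hasDerivAt_mul_exp_mul_comp_div hslope).congr_of_eventuallyEq hpdX).deriv]
  field_simp
  ring

lemma pdYY_weightedRescale (hu : ContDiffOn ℝ 2 (tripleUncurry u) Omega) (hA : 0 < A t)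
    (hx : 0 < x) (hy : 0 < y) :
    pdYY (weightedRescale K C A τ u) x y t =
      K t * exp (C t * (x + y) / A t) *
        ((C t ^ 2 * u (x / A t) (y / A t) (τ t) + 2 * C t * pdY u (x / A t) (y / A t) (τ t) +
          pdYY u (x / A t) (y / A t) (τ t)) / A t ^ 2) := by
  have hxA := div_pos hx hA
  have hyA := div_pos hy hA
  have hslope : HasDerivAt (fun s => (C t * u (x / A t) s (τ t) + pdY u (x / A t) s (τ t)) / A t)
      ((C t * pdY u (x / A t) (y / A t) (τ t) + pdYY u (x / A t) (y / A t) (τ t)) / A t)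
      (y / A t) :=
    (((hasDerivAt_pdY hu hxA hyA).const_mul (C t)).add (hasDerivAt_pdYY hu hxA hyA)).div_const _
  have hpdY : (fun z => pdY (weightedRescale K C A τ u) x z t) =ᶠ[nhds y] fun z =>
      K t * exp (C t * (x + z) / A t) *
        ((C t * u (x / A t) (z / A t) (τ t) + pdY u (x / A t) (z / A t) (τ t)) / A t) := by
    filter_upwards [eventually_gt_nhds hy] with z hz
    exact pdY_weightedRescale hu hA hx hz
  rw [pdYY, ((hasDerivAt_mul_exp_mul_comp_div' hslope).congr_of_eventuallyEq hpdY).deriv]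
  field_simp
  ring

lemma pdT_weightedRescale (hu : ContDiffOn ℝ 2 (tripleUncurry u) Omega) {K' C' A' τ' : ℝ}
    (hK : HasDerivAt K K' t) (hC : HasDerivAt C C' t) (hA' : HasDerivAt A A' t)
    (hτ : HasDerivAt τ τ' t) (hA : 0 < A t) (hx : 0 < x) (hy : 0 < y) :
    pdT (weightedRescale K C A τ u) x y t =
      K' * exp (C t * (x + y) / A t) * u (x / A t) (y / A t) (τ t) +
        K t * exp (C t * (x + y) / A t) *
          ((C' * A t - C t * A') * (x + y) / A t ^ 2 * u (x / A t) (y / A t) (τ t) -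
            x * A' / A t ^ 2 * pdX u (x / A t) (y / A t) (τ t) -
            y * A' / A t ^ 2 * pdY u (x / A t) (y / A t) (τ t) +
            τ' * pdT u (x / A t) (y / A t) (τ t)) := by
  have hx' : HasDerivAt (fun s => x / A s) (-(x * A') / A t ^ 2) t :=
    ((hasDerivAt_const t x).div hA' hA.ne').congr_deriv (by ring)
  have hy' : HasDerivAt (fun s => y / A s) (-(y * A') / A t ^ 2) t :=
    ((hasDerivAt_const t y).div hA' hA.ne').congr_deriv (by ring)
  have hU := hasDerivAt_comp_curve hu hx' hy' hτ (div_pos hx hA) (div_pos hy hA)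
  have hE := ((hC.mul_const (x + y)).div hA' hA.ne').exp
  refine ((hK.mul hE).mul hU).deriv.trans ?_
  simp only [Pi.mul_apply, Pi.div_apply]
  field_simp
  ring

end WeightedRescale

/-- Symmetry of the Longstaff–Schwartz equation when `b = e ≠ 0` (subcase 2.2, group `G₁`). -/
theorem ls_symmetry_b_eq_e_G1 (a b d e : ℝ) (hbe : b = e) (hb : b ≠ 0)
    (u : ℝ → ℝ → ℝ → ℝ) (hu : IsLSSolution a b d e u) (ε : ℝ) :
    ∀ x y t : ℝ, 0 < x → 0 < y → 1 + b * ε * Real.exp (b * t) > 0 →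
      LSEq a b d e
        (fun x y t =>
          (1 + b * ε * Real.exp (b * t)) ^ (-(2 * (a + d))) *
            Real.exp (2 * b ^ 2 * ε * Real.exp (b * t) * (x + y) /
              (1 + b * ε * Real.exp (b * t))) *
            u (x / (1 + b * ε * Real.exp (b * t))) (y / (1 + b * ε * Real.exp (b * t)))
              (t - Real.log (1 + b * ε * Real.exp (b * t)) / b))
        x y t := by
  subst hbe
  intro x y t hx hy hA_pos
  set A : ℝ → ℝ := fun s => 1 + b * ε * exp (b * s) with hA_def
  have hA : 0 < A t := hA_pos
  have hexp : HasDerivAt (fun s => exp (b * s)) (exp (b * t) * b) t := by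
    simpa using ((hasDerivAt_id t).const_mul b).exp
  have hA' : HasDerivAt A (b ^ 2 * ε * exp (b * t)) t :=
    ((hexp.const_mul (b * ε)).const_add 1).congr_deriv (by ring)
  have hK := hA'.rpow_const (p := -(2 * (a + d))) (Or.inl hA.ne')
  have hC := hexp.const_mul (2 * b ^ 2 * ε)
  have hτ : HasDerivAt (fun s => s - log (A s) / b) (A t)⁻¹ t :=
    ((hasDerivAt_id t).sub ((hA'.log hA.ne').div_const b)).congr_deriv (by field_simp; ring)
  have hut := hu.2 (x / A t) (y / A t) (t - log (A t) / b) (div_pos hx hA) (div_pos hy hA)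
  change LSEq a b d b (weightedRescale (fun s => A s ^ (-(2 * (a + d))))
    (fun s => 2 * b ^ 2 * ε * exp (b * s)) A (fun s => s - log (A s) / b) u) x y t
  unfold LSEq at hut ⊢
  rw [pdT_weightedRescale hu.1 hK hC hA' hτ hA hx hy, pdX_weightedRescale hu.1 hA hx hy,
    pdY_weightedRescale hu.1 hA hx hy, pdXX_weightedRescale hu.1 hA hx hy,
    pdYY_weightedRescale hu.1 hA hx hy, hut, rpow_sub_one hA.ne']
  simp only [hA_def]
  field_simp
  ring
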